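/- Let D be a Dirichlet–Ferguson process with parameter α on (A,𝒜) and X the associated Pólya sequence. For h : A → ℝ with E[h(X_1)²] < ∞, set V(h) = ∫_A h² dD − (∫_A h dD)². Then the Bayes estimator of V(h) under squared loss given no observations is E[V(h)] = (α(A)/(α(A)+1)) · Var[h(X_1)]. -/

import Mathlib

/-!
Since `D` directs `X`, `E[∫ h² dD] = E[h(X₁)²]` and `E[(∫ h dD)²] = E[h(X₁) h(X₂)]`. In the Pólya
urn `X₁` has law `α / α(A)` and, given `X₁`, `X₂` has law `(α + δ_{X₁}) / (α(A) + 1)`, so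
`E[h(X₁) h(X₂)] = (α(A) (E h(X₁))² + E h(X₁)²) / (α(A) + 1)`; subtracting the two moments gives
the claim.
-/

open MeasureTheory

/-- The joint law of the first `n` instants of a Pólya sequence with parameter `α`. -/
noncomputable def polyaMeasure {A : Type*} [MeasurableSpace A] (α : Measure A) :
    (n : ℕ) → Measure (Fin n → A)
  | 0 => Measure.dirac (fun i => i.elim0)
  | (n + 1) =>
      (polyaMeasure α n).bind (fun a =>
        ((α Set.univ + n)⁻¹ •
            (α + ∑ i : Fin n, Measure.dirac (a i))).map (Fin.snoc a))

open Set

section PolyaMeasure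

variable {A : Type*} [MeasurableSpace A] (α : Measure A)

lemma measurable_snoc_prod {n : ℕ} :
    Measurable fun q : (Fin n → A) × A => (Fin.snoc q.1 q.2 : Fin (n + 1) → A) := by
  refine measurable_pi_lambda _ fun i => ?_
  induction i using Fin.lastCases with
  | last => simpa using measurable_snd
  | cast j => simpa using (measurable_fst (α := Fin n → A) (β := A)).eval (a := j)

lemma measurable_snoc {n : ℕ} (a : Fin n → A) :
    Measurable fun y : A => (Fin.snoc a y : Fin (n + 1) → A) :=
  measurable_snoc_prod.comp (measurable_const.prodMk measurable_id)

-- `polyaMeasure α (n + 1) = (polyaMeasure α n).bind (polyaStep α)` holds by `rfl`.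
noncomputable def polyaStep {n : ℕ} (a : Fin n → A) : Measure (Fin (n + 1) → A) :=
  ((α univ + n)⁻¹ • (α + ∑ i : Fin n, Measure.dirac (a i))).map (Fin.snoc a)

lemma polyaStep_apply {n : ℕ} (a : Fin n → A) {s : Set (Fin (n + 1) → A)}
    (hs : MeasurableSet s) :
    polyaStep α a s = (α univ + n)⁻¹ *
      (α {y | (Fin.snoc a y : Fin (n + 1) → A) ∈ s} +
        ∑ i, s.indicator 1 (Fin.snoc a (a i) : Fin (n + 1) → A)) := by
  have hmeas := measurable_snoc a
  rw [polyaStep, Measure.map_apply hmeas hs, Measure.smul_apply, Measure.add_apply,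
    Measure.coe_finsetSum, Finset.sum_apply, smul_eq_mul]
  simp_rw [Measure.dirac_apply' _ (hmeas hs)]
  rfl

lemma measurable_polyaStep [SFinite α] {n : ℕ} : Measurable (polyaStep α (n := n)) := by
  refine Measure.measurable_of_measurable_coe _ fun s hs => ?_
  simp_rw [polyaStep_apply α _ hs]
  refine (Measurable.add ?_ (Finset.measurable_sum _ fun i _ => ?_)).const_mul _
  · exact measurable_measure_prodMk_left (measurable_snoc_prod hs)
  · exact (measurable_one.indicator hs).comp
      (measurable_snoc_prod.comp (measurable_id.prodMk (measurable_pi_apply i)))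

lemma polyaMeasure_succ_apply [SFinite α] (n : ℕ) {s : Set (Fin (n + 1) → A)}
    (hs : MeasurableSet s) :
    polyaMeasure α (n + 1) s = ∫⁻ a, polyaStep α a s ∂polyaMeasure α n :=
  Measure.bind_apply hs (measurable_polyaStep α).aemeasurable

lemma map_funUnique_polyaMeasure_one [SFinite α] :
    (polyaMeasure α 1).map (MeasurableEquiv.funUnique (Fin 1) A) = (α univ)⁻¹ • α := by
  have hone : polyaMeasure α 1 = polyaStep α (fun i : Fin 0 => i.elim0) :=
    Measure.dirac_bind (measurable_polyaStep α) _
  have hsnoc :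
      ⇑(MeasurableEquiv.funUnique (Fin 1) A) ∘ Fin.snoc (fun i : Fin 0 => i.elim0) = id := by
    funext x; rfl
  rw [hone, polyaStep, Measure.map_map (MeasurableEquiv.measurable _) (measurable_snoc _), hsnoc]
  simp

lemma map_finTwoArrow_polyaMeasure_two [IsFiniteMeasure α] :
    (polyaMeasure α 2).map MeasurableEquiv.finTwoArrow =
      (α univ + 1)⁻¹ • (((α univ)⁻¹ • α).prod α + ((α univ)⁻¹ • α).map fun x => (x, x)) := by
  have hone : polyaMeasure α 1 =
      ((α univ)⁻¹ • α).map (MeasurableEquiv.funUnique (Fin 1) A).symm := by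
    rw [← map_funUnique_polyaMeasure_one, MeasurableEquiv.map_symm_map]
  ext s hs
  have hs' := MeasurableEquiv.finTwoArrow.measurable hs
  rw [Measure.map_apply MeasurableEquiv.finTwoArrow.measurable hs,
    polyaMeasure_succ_apply α 1 hs', hone, lintegral_map_equiv]
  have hstep (x : A) :
      polyaStep α ((MeasurableEquiv.funUnique (Fin 1) A).symm x) (MeasurableEquiv.finTwoArrow ⁻¹' s)
        = (α univ + 1)⁻¹ * (α (Prod.mk x ⁻¹' s) + ((fun x => (x, x)) ⁻¹' s).indicator 1 x) := by
    rw [polyaStep_apply α _ hs', Fin.sum_univ_one, Nat.cast_one]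
    rfl
  have hdiag : Measurable fun x : A => (x, x) := measurable_id.prodMk measurable_id
  simp_rw [hstep]
  rw [lintegral_const_mul' _ _ (by simp), lintegral_add_left (measurable_measure_prodMk_left hs),
    lintegral_indicator_one (hdiag hs)]
  simp only [Measure.smul_apply, Measure.add_apply, Measure.prod_apply hs,
    Measure.map_apply hdiag hs, smul_eq_mul]

end PolyaMeasure

section PolyaMoments

variable {A : Type*} [MeasurableSpace A] {h : A → ℝ}

lemma integrable_mul_map_diag {μ : Measure A} (hhm : Measurable h)
    (hh2 : Integrable (fun x => h x ^ 2) μ) :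
    Integrable (fun p : A × A => h p.1 * h p.2) (μ.map fun x => (x, x)) :=
  (integrable_map_measure (by fun_prop) (by fun_prop)).2
    (by simpa [Function.comp_def, sq] using hh2)

variable (α : Measure A) [IsFiniteMeasure α]

lemma integrable_mul_polyaMeasure_two (hhm : Measurable h) (hh : Integrable h α)
    (hh2 : Integrable (fun x => h x ^ 2) α) :
    Integrable (fun a : Fin 2 → A => h (a 0) * h (a 1)) (polyaMeasure α 2) := by
  refine (integrable_map_equiv MeasurableEquiv.finTwoArrow (fun p => h p.1 * h p.2)).1 ?_
  rw [map_finTwoArrow_polyaMeasure_two]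
  exact ((hh.to_average.mul_prod hh).add_measure
    (integrable_mul_map_diag hhm hh2.to_average)).smul_measure (by simp)

lemma integral_mul_polyaMeasure_two (hhm : Measurable h) (hh : Integrable h α)
    (hh2 : Integrable (fun x => h x ^ 2) α) :
    ∫ a : Fin 2 → A, h (a 0) * h (a 1) ∂polyaMeasure α 2 =
      (α.real univ + 1)⁻¹ * (α.real univ * (⨍ x, h x ∂α) ^ 2 + ⨍ x, h x ^ 2 ∂α) := by
  have hpair : ∫ a : Fin 2 → A, h (a 0) * h (a 1) ∂polyaMeasure α 2 =
      ∫ p : A × A, h p.1 * h p.2 ∂(polyaMeasure α 2).map MeasurableEquiv.finTwoArrow := by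
    rw [integral_map_equiv]; rfl
  rw [hpair, map_finTwoArrow_polyaMeasure_two, integral_smul_measure,
    integral_add_measure (hh.to_average.mul_prod hh) (integrable_mul_map_diag hhm hh2.to_average),
    integral_prod_mul, integral_map (by fun_prop) (by fun_prop)]
  have hc : (α univ + 1)⁻¹.toReal = (α.real univ + 1)⁻¹ := by
    rw [ENNReal.toReal_inv, ENNReal.toReal_add (measure_ne_top α univ) ENNReal.one_ne_top,
      ENNReal.toReal_one, measureReal_def]
  simp only [← average_eq', ← measure_smul_average α h, hc, smul_eq_mul, sq]
  ring

end PolyaMoments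

section PolyaSequence

variable {A Ω : Type*} [MeasurableSpace A] [MeasurableSpace Ω] (α : Measure A) [IsFiniteMeasure α]
  {P : Measure Ω} {X : ℕ → Ω → A} {h : A → ℝ}

lemma map_eq_inv_smul_of_map_eq_polyaMeasure_one (hXmeas : ∀ i, Measurable (X i))
    (hX : P.map (fun ω (i : Fin 1) => X (i + 1) ω) = polyaMeasure α 1) :
    P.map (X 1) = (α univ)⁻¹ • α := by
  rw [← map_funUnique_polyaMeasure_one, ← hX,
    Measure.map_map (MeasurableEquiv.measurable _) (measurable_pi_lambda _ fun _ => hXmeas _)]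
  rfl

lemma integrable_mul_of_map_eq_polyaMeasure_two (hXmeas : ∀ i, Measurable (X i))
    (hX : P.map (fun ω (i : Fin 2) => X (i + 1) ω) = polyaMeasure α 2) (hhm : Measurable h)
    (hh : Integrable h α) (hh2 : Integrable (fun x => h x ^ 2) α) :
    Integrable (fun ω => h (X 1 ω) * h (X 2 ω)) P := by
  have hint := integrable_mul_polyaMeasure_two α hhm hh hh2
  rwa [← hX, integrable_map_measure (by fun_prop)
    (measurable_pi_lambda _ fun _ => hXmeas _).aemeasurable] at hint

lemma integral_mul_of_map_eq_polyaMeasure_two (hXmeas : ∀ i, Measurable (X i))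
    (hX : P.map (fun ω (i : Fin 2) => X (i + 1) ω) = polyaMeasure α 2) (hhm : Measurable h)
    (hh : Integrable h α) (hh2 : Integrable (fun x => h x ^ 2) α) :
    ∫ ω, h (X 1 ω) * h (X 2 ω) ∂P =
      (α.real univ + 1)⁻¹ * (α.real univ * (⨍ x, h x ∂α) ^ 2 + ⨍ x, h x ^ 2 ∂α) := by
  rw [← integral_mul_polyaMeasure_two α hhm hh hh2, ← hX,
    integral_map (measurable_pi_lambda _ fun _ => hXmeas _).aemeasurable (by fun_prop)]
  rfl

end PolyaSequence

lemma integral_pi_fin_one {A E : Type*} [MeasurableSpace A] [NormedAddCommGroup E]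
    [NormedSpace ℝ E] (μ : Measure A) (f : A → E) :
    ∫ a, f (a 0) ∂Measure.pi (fun _ : Fin 1 => μ) = ∫ x, f x ∂μ :=
  (measurePreserving_funUnique μ (Fin 1)).integral_comp' f

lemma integral_pi_fin_two_mul {A 𝕜 : Type*} [MeasurableSpace A] [RCLike 𝕜] (μ : Measure A)
    [SigmaFinite μ] (f : A → 𝕜) :
    ∫ a, f (a 0) * f (a 1) ∂Measure.pi (fun _ : Fin 2 => μ) = (∫ x, f x ∂μ) ^ 2 := by
  simpa [Fin.prod_univ_two] using integral_fintype_prod_eq_pow (ι := Fin 2) (μ := μ) f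

theorem bayes_estimator_conditional_variance_no_observations_general
    {A Ω : Type*} [MeasurableSpace A] [MeasurableSpace Ω]
    (α : Measure A) [IsFiniteMeasure α] (θ : ℝ)
    (hθ : θ = (α Set.univ).toReal)
    (P : Measure Ω) [IsProbabilityMeasure P]
    (X : ℕ → Ω → A) (hXmeas : ∀ i, Measurable (X i))
    (hX : ∀ m : ℕ, Measure.map (fun ω (i : Fin m) => X (i + 1) ω) P = polyaMeasure α m)
    (D : Ω → Measure A) (hDprob : ∀ ω, IsProbabilityMeasure (D ω))
    -- D is the directing (de Finetti) measure of X: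
    (hdir : ∀ (m : ℕ) (f : (Fin m → A) → ℝ), Measurable f →
      Integrable (fun ω => f (fun i => X (i + 1) ω)) P →
      Integrable (fun ω => ∫ a, f a ∂(Measure.pi fun _ : Fin m => D ω)) P →
      ∫ ω, (∫ a, f a ∂(Measure.pi fun _ : Fin m => D ω)) ∂P =
        ∫ ω, f (fun i => X (i + 1) ω) ∂P)
    (h : A → ℝ) (hhm : Measurable h)
    (hh2 : MemLp (fun ω => h (X 1 ω)) 2 P)
    (hint1 : Integrable (fun ω => ∫ a, (h a) ^ 2 ∂(D ω)) P)
    (hint2 : Integrable (fun ω => (∫ a, h a ∂(D ω)) ^ 2) P) :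
    ∫ ω, ((∫ a, (h a) ^ 2 ∂(D ω)) - (∫ a, h a ∂(D ω)) ^ 2) ∂P =
      θ / (θ + 1) *
        ((∫ ω, (h (X 1 ω)) ^ 2 ∂P) - (∫ ω, h (X 1 ω) ∂P) ^ 2) := by
  have hlaw := map_eq_inv_smul_of_map_eq_polyaMeasure_one α hXmeas (hX 1)
  have hmoment (g : A → ℝ) (hg : Measurable g) : ∫ ω, g (X 1 ω) ∂P = ⨍ x, g x ∂α := by
    rw [average_eq', ← hlaw, integral_map (hXmeas 1).aemeasurable hg.aestronglyMeasurable]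
  have hhL2 : MemLp h 2 ((α univ)⁻¹ • α) :=
    hlaw ▸ (memLp_map_measure_iff hhm.aestronglyMeasurable (hXmeas 1).aemeasurable).2 hh2
  have hhα : Integrable h α := integrable_average.1 (hhL2.integrable one_le_two)
  have hh2α : Integrable (fun x => h x ^ 2) α := integrable_average.1 hhL2.integrable_sq
  have hD2 : ∫ ω, ∫ x, h x ^ 2 ∂D ω ∂P = ∫ ω, h (X 1 ω) ^ 2 ∂P := by
    have hpi (ω : Ω) := integral_pi_fin_one (D ω) fun x => h x ^ 2
    simpa [hpi] using hdir 1 (fun a => h (a 0) ^ 2) (by fun_prop) hh2.integrable_sq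
      (by simpa [hpi] using hint1)
  have hD1 : ∫ ω, (∫ x, h x ∂D ω) ^ 2 ∂P = ∫ ω, h (X 1 ω) * h (X 2 ω) ∂P := by
    simpa [integral_pi_fin_two_mul] using hdir 2 (fun a => h (a 0) * h (a 1)) (by fun_prop)
      (integrable_mul_of_map_eq_polyaMeasure_two α hXmeas (hX 2) hhm hhα hh2α)
      (by simpa [integral_pi_fin_two_mul] using hint2)
  rw [integral_sub hint1 hint2, hD2, hD1,
    integral_mul_of_map_eq_polyaMeasure_two α hXmeas (hX 2) hhm hhα hh2α,
    hmoment _ (hhm.pow_const 2), hmoment h hhm, hθ, ← measureReal_def]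
  field_simp
  ring

/-- Bayes estimator of the conditional variance with no observations: for a
Dirichlet–Ferguson process `D` with parameter `α` directing the Pólya sequence `X`,
and `V(h) = ∫ h² dD − (∫ h dD)²`, one has
`E[V(h)] = (α(A)/(α(A)+1)) · Var[h(X₁)]`. -/
theorem bayes_estimator_conditional_variance_no_observations
    {A Ω : Type*} [MeasurableSpace A] [MeasurableSpace Ω]
    (α : Measure A) [IsFiniteMeasure α] (hα : α ≠ 0) (θ : ℝ)
    (hθ : θ = (α Set.univ).toReal)
    (P : Measure Ω) [IsProbabilityMeasure P]
    (X : ℕ → Ω → A) (hXmeas : ∀ i, Measurable (X i))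
    (hX : ∀ m : ℕ, Measure.map (fun ω (i : Fin m) => X (i + 1) ω) P = polyaMeasure α m)
    (D : Ω → Measure A) (hDprob : ∀ ω, IsProbabilityMeasure (D ω))
    (hDmeas : ∀ C : Set A, MeasurableSet C → Measurable fun ω => D ω C)
    -- D is the directing (de Finetti) measure of X:
    (hdir : ∀ (m : ℕ) (f : (Fin m → A) → ℝ), Measurable f →
      Integrable (fun ω => f (fun i => X (i + 1) ω)) P →
      Integrable (fun ω => ∫ a, f a ∂(Measure.pi fun _ : Fin m => D ω)) P →
      ∫ ω, (∫ a, f a ∂(Measure.pi fun _ : Fin m => D ω)) ∂P =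
        ∫ ω, f (fun i => X (i + 1) ω) ∂P)
    (h : A → ℝ) (hhm : Measurable h)
    (hh2 : MemLp (fun ω => h (X 1 ω)) 2 P)
    (hint1 : Integrable (fun ω => ∫ a, (h a) ^ 2 ∂(D ω)) P)
    (hint2 : Integrable (fun ω => (∫ a, h a ∂(D ω)) ^ 2) P) :
    ∫ ω, ((∫ a, (h a) ^ 2 ∂(D ω)) - (∫ a, h a ∂(D ω)) ^ 2) ∂P =
      θ / (θ + 1) *
        ((∫ ω, (h (X 1 ω)) ^ 2 ∂P) - (∫ ω, h (X 1 ω) ∂P) ^ 2) :=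
  bayes_estimator_conditional_variance_no_observations_general α θ hθ P X hXmeas hX D hDprob hdir h
    hhm hh2 hint1 hint2
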